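/- Let 𝖧 be a complex Hilbert space, a a bounded operator on 𝖧, γ ≥ 0 and θ ∈ ℝ. Set L₁ = L₂ = √γ·a and S = e^{iθ}·1 (a scalar multiple of the identity operator). Then the 1-channel series product (1, L₂, 0) ◁ ( (S, 0, 0) ◁ (1, L₁, 0) ) equals ( e^{iθ}·1 , (1 + e^{iθ})·√γ·a , γ·sin(θ)·a†a ), and moreover it also equals (S, 0, 0) ◁ ( (1, e^{−iθ}·L₂, 0) ◁ (1, L₁, 0) ), i.e. the phase shift can be moved past the second mirror coupling. -/

import Mathlib

noncomputable section

variable {E : Type*} [NormedAddCommGroup E] [InnerProductSpace ℂ E] [CompleteSpace E]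

/-- Scattering component of the 1-channel series product `G₂ ◁ G₁`. -/
def series1S (S₂ S₁ : E →L[ℂ] E) : E →L[ℂ] E := S₂ * S₁

/-- Coupling component of the 1-channel series product `G₂ ◁ G₁`: `L₂ + S₂L₁`. -/
def series1L (S₂ L₂ L₁ : E →L[ℂ] E) : E →L[ℂ] E := L₂ + S₂ * L₁

/-- Hamiltonian component of the 1-channel series product `G₂ ◁ G₁`:
`H₁ + H₂ + (1/(2i))(L₂*S₂L₁ − L₁*S₂*L₂)`. -/
def series1H (S₂ L₂ L₁ H₁ H₂ : E →L[ℂ] E) : E →L[ℂ] E :=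
  H₁ + H₂ + ((2 * Complex.I)⁻¹) • (star L₂ * S₂ * L₁ - star L₁ * star S₂ * L₂)

/-!
A phase shifter `(c, 0, 0)` carries no coupling, so in a series product it only multiplies the
next coupling by `c` and adds no Hamiltonian. Closing the loop `L → c • L → L` then leaves the
Hamiltonian `(2i)⁻¹ (c - c̄) L*L = (Im c) L*L`, which for `c = e^{iθ}`, `L = √γ a` is
`γ sin θ a*a`. Moving the phase shifter past the second mirror multiplies that coupling by
`c⁻¹ = c̄`; the conjugate is exactly what keeps the Hamiltonian correction unchanged.
-/

open ComplexConjugate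

section Coupling

omit [CompleteSpace E]

variable (c : ℂ) (L L₁ L₂ : E →L[ℂ] E)

theorem series1L_phase_zero : series1L (c • 1) 0 L = c • L := by
  simp [series1L]

theorem series1L_phase_feedback : series1L 1 L (series1L (c • 1) 0 L) = (1 + c) • L := by
  rw [series1L_phase_zero, series1L, one_mul, add_smul, one_smul]

theorem series1L_phase_comm {c' : ℂ} (hc : c * c' = 1) :
    series1L (c • 1) 0 (series1L 1 (c' • L₂) L₁) = series1L 1 L₂ (series1L (c • 1) 0 L₁) := by
  rw [series1L_phase_zero, series1L_phase_zero]
  simp only [series1L, one_mul, smul_add, smul_smul, hc, one_smul]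

end Coupling

section Hamiltonian

variable (c : ℂ) (L L₁ L₂ H₁ H₂ : E →L[ℂ] E)

theorem series1H_phase_zero : series1H (c • 1) 0 L H₁ H₂ = H₁ + H₂ := by
  simp [series1H]

theorem series1H_one_smul_right :
    series1H 1 L (c • L) H₁ H₂ = H₁ + H₂ + (c.im : ℂ) • (star L * L) := by
  have hIm : (2 * Complex.I)⁻¹ * (c - conj c) = c.im := by
    rw [Complex.sub_conj]
    push_cast
    field_simp
  simp only [series1H, star_one, mul_one, star_smul, smul_mul_assoc, mul_smul_comm, ← sub_smul,
    smul_smul, Complex.star_def, hIm]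

theorem series1H_one_conj_smul_left :
    series1H 1 (conj c • L₂) L₁ H₁ H₂ = series1H 1 L₂ (c • L₁) H₁ H₂ := by
  simp only [series1H, star_one, mul_one, star_smul, smul_mul_assoc, mul_smul_comm,
    Complex.star_def, Complex.conj_conj]

theorem series1H_phase_feedback :
    series1H 1 L (series1L (c • 1) 0 L) (series1H (c • 1) 0 L 0 0) 0 =
      (c.im : ℂ) • (star L * L) := by
  rw [series1L_phase_zero, series1H_phase_zero, series1H_one_smul_right, add_zero, zero_add,
    zero_add]

theorem series1H_phase_comm :
    series1H (c • 1) 0 (series1L 1 (conj c • L₂) L₁) (series1H 1 (conj c • L₂) L₁ H₁ H₂) 0 =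
      series1H 1 L₂ (series1L (c • 1) 0 L₁) (series1H (c • 1) 0 L₁ H₁ 0) H₂ := by
  rw [series1H_phase_zero, series1L_phase_zero, series1H_phase_zero, add_zero, add_zero,
    series1H_one_conj_smul_left]

end Hamiltonian

theorem all_optical_feedback (a : E →L[ℂ] E) (γ θ : ℝ) (hγ : 0 ≤ γ) :
    (series1S (1 : E →L[ℂ] E)
        (series1S (Complex.exp (Complex.I * θ) • (1 : E →L[ℂ] E)) 1) =
      Complex.exp (Complex.I * θ) • (1 : E →L[ℂ] E) ∧
    series1L (1 : E →L[ℂ] E) ((Real.sqrt γ : ℂ) • a)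
        (series1L (Complex.exp (Complex.I * θ) • (1 : E →L[ℂ] E)) 0
          ((Real.sqrt γ : ℂ) • a)) =
      ((1 + Complex.exp (Complex.I * θ)) * (Real.sqrt γ : ℂ)) • a ∧
    series1H (1 : E →L[ℂ] E) ((Real.sqrt γ : ℂ) • a)
        (series1L (Complex.exp (Complex.I * θ) • (1 : E →L[ℂ] E)) 0
          ((Real.sqrt γ : ℂ) • a))
        (series1H (Complex.exp (Complex.I * θ) • (1 : E →L[ℂ] E)) 0
          ((Real.sqrt γ : ℂ) • a) 0 0) 0 =
      ((γ * Real.sin θ : ℝ) : ℂ) • (star a * a)) ∧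
    (series1S (1 : E →L[ℂ] E)
        (series1S (Complex.exp (Complex.I * θ) • (1 : E →L[ℂ] E)) 1) =
      series1S (Complex.exp (Complex.I * θ) • (1 : E →L[ℂ] E))
        (series1S 1 1) ∧
    series1L (1 : E →L[ℂ] E) ((Real.sqrt γ : ℂ) • a)
        (series1L (Complex.exp (Complex.I * θ) • (1 : E →L[ℂ] E)) 0
          ((Real.sqrt γ : ℂ) • a)) =
      series1L (Complex.exp (Complex.I * θ) • (1 : E →L[ℂ] E)) 0
        (series1L 1 (Complex.exp (-(Complex.I * θ)) • ((Real.sqrt γ : ℂ) • a))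
          ((Real.sqrt γ : ℂ) • a)) ∧
    series1H (1 : E →L[ℂ] E) ((Real.sqrt γ : ℂ) • a)
        (series1L (Complex.exp (Complex.I * θ) • (1 : E →L[ℂ] E)) 0
          ((Real.sqrt γ : ℂ) • a))
        (series1H (Complex.exp (Complex.I * θ) • (1 : E →L[ℂ] E)) 0
          ((Real.sqrt γ : ℂ) • a) 0 0) 0 =
      series1H (Complex.exp (Complex.I * θ) • (1 : E →L[ℂ] E)) 0
        (series1L 1 (Complex.exp (-(Complex.I * θ)) • ((Real.sqrt γ : ℂ) • a))
          ((Real.sqrt γ : ℂ) • a))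
        (series1H 1 (Complex.exp (-(Complex.I * θ)) • ((Real.sqrt γ : ℂ) • a))
          ((Real.sqrt γ : ℂ) • a) 0 0) 0) := by
  have hc_im : (Complex.exp (Complex.I * θ)).im = Real.sin θ := by
    rw [mul_comm, Complex.exp_ofReal_mul_I_im]
  set c := Complex.exp (Complex.I * θ)
  have hc_conj : Complex.exp (-(Complex.I * θ)) = conj c := by
    rw [← Complex.exp_conj, map_mul, Complex.conj_I, Complex.conj_ofReal, neg_mul]
  have hc_mul : c * Complex.exp (-(Complex.I * θ)) = 1 := by
    rw [← Complex.exp_add, add_neg_cancel, Complex.exp_zero]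
  have hL : star ((Real.sqrt γ : ℂ) • a) * ((Real.sqrt γ : ℂ) • a) = (γ : ℂ) • (star a * a) := by
    rw [star_smul, smul_mul_assoc, mul_smul_comm, smul_smul, Complex.star_def,
      Complex.conj_ofReal, ← Complex.ofReal_mul, Real.mul_self_sqrt hγ]
  refine ⟨⟨by simp [series1S], by rw [series1L_phase_feedback, smul_smul], ?_⟩, by simp [series1S],
    (series1L_phase_comm c _ _ hc_mul).symm, ?_⟩
  · rw [series1H_phase_feedback, hL, hc_im, smul_smul, mul_comm, Complex.ofReal_mul]
  · rw [hc_conj, series1H_phase_comm]
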